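/- arXiv:1603.09329 — 4 statements merged into one kernel-verified Lean document; each statement's English description precedes it below -/
import Mathlib

section
/- For every α ∈ ℝ, the set { ζ ∈ ℝ : ζ ∉ {η_1, …, η_m} ∪ {−θ_1, …, −θ_n} and G(ζ) = α } is finite and contains at most m+n+2 elements. -/
/-!
Multiplying `G ζ - α` by `∏ i, (ζ - η i) * ∏ j, (ζ + θ j)` clears all denominators. The quadratic
part `(σ² / 2) ζ² + μ ζ - λ - α` then contributes a polynomial of exact degree `m + n + 2`, while
each partial fraction contributes degree at most `m + n - 1`. So every solution off the poles is a
root of one nonzero polynomial of degree `m + n + 2`.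
-/

open Finset Polynomial Lagrange

theorem Polynomial.finite_and_ncard_le_natDegree_of_forall_isRoot {R : Type*} [CommRing R]
    [IsDomain R] {P : R[X]} (hP : P ≠ 0) {S : Set R} (hS : ∀ x ∈ S, P.IsRoot x) :
    S.Finite ∧ S.ncard ≤ P.natDegree := by
  have hsub : S ⊆ P.rootSet R := fun x hx => by
    rw [mem_rootSet, coe_aeval_eq_eval]
    exact ⟨hP, hS x hx⟩
  exact ⟨(P.rootSet_finite R).subset hsub,
    (Set.ncard_le_ncard hsub (P.rootSet_finite R)).trans (P.ncard_rootSet_le R)⟩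

section PartialFractions

variable {ι K : Type*} [Fintype ι] [DecidableEq ι] [Field K]

theorem sum_div_sub_mul_prod_sub (a c : ι → K) {x : K} (hx : ∀ i, x ≠ a i) :
    (∑ i, c i / (x - a i)) * ∏ i, (x - a i) = ∑ i, c i * ∏ k ∈ univ.erase i, (x - a k) := by
  rw [sum_mul]
  refine sum_congr rfl fun i _ => ?_
  rw [← mul_prod_erase _ _ (mem_univ i), div_mul_eq_mul_div, mul_div_assoc,
    mul_div_cancel_left₀ _ (sub_ne_zero.2 (hx i))]

theorem degree_sum_smul_nodal_erase_lt (a c : ι → K) :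
    (∑ i, c i • nodal (univ.erase i) a).degree < Fintype.card ι := by
  refine (degree_sum_le _ _).trans_lt ((Finset.sup_lt_iff (WithBot.bot_lt_coe _)).2 fun i _ => ?_)
  calc (c i • nodal (univ.erase i) a).degree ≤ (nodal (univ.erase i) a).degree :=
        degree_smul_le _ _
    _ < Fintype.card ι := by
      rw [degree_nodal, card_erase_of_mem (mem_univ i), card_univ, Nat.cast_lt]
      exact Nat.sub_lt (Fintype.card_pos_iff.2 ⟨i⟩) one_pos

/-- The numerator of `Q + ∑ i, c i / (X - a i)` over the denominator `∏ i, (X - a i)`. -/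
noncomputable def clearedNumerator (Q : K[X]) (a c : ι → K) : K[X] :=
  Q * nodal univ a + ∑ i, c i • nodal (univ.erase i) a

theorem eval_clearedNumerator (Q : K[X]) (a c : ι → K) {x : K} (hx : ∀ i, x ≠ a i) :
    (clearedNumerator Q a c).eval x = (Q.eval x + ∑ i, c i / (x - a i)) * ∏ i, (x - a i) := by
  rw [add_mul, sum_div_sub_mul_prod_sub a c hx, clearedNumerator, eval_add, eval_mul,
    eval_finsetSum]
  simp only [eval_smul, eval_nodal, smul_eq_mul]

theorem degree_clearedNumerator {Q : K[X]} (hQ : Q ≠ 0) (a c : ι → K) :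
    (clearedNumerator Q a c).degree = (Q.natDegree + Fintype.card ι : ℕ) := by
  have hlead : (Q * nodal univ a).degree = (Q.natDegree + Fintype.card ι : ℕ) := by
    rw [degree_mul, degree_nodal, card_univ, degree_eq_natDegree hQ, Nat.cast_add]
  rw [clearedNumerator, degree_add_eq_left_of_degree_lt, hlead]
  refine (degree_sum_smul_nodal_erase_lt a c).trans_le ?_
  rw [hlead, Nat.cast_le]
  exact Nat.le_add_left _ _

theorem isRoot_clearedNumerator {Q : K[X]} {a c : ι → K} {x : K} (hx : ∀ i, x ≠ a i)
    (h : Q.eval x + ∑ i, c i / (x - a i) = 0) : (clearedNumerator Q a c).IsRoot x := by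
  rw [IsRoot, eval_clearedNumerator Q a c hx, h, zero_mul]

theorem natDegree_clearedNumerator {Q : K[X]} (hQ : Q ≠ 0) (a c : ι → K) :
    (clearedNumerator Q a c).natDegree = Q.natDegree + Fintype.card ι :=
  natDegree_eq_of_degree_eq_some (degree_clearedNumerator hQ a c)

theorem clearedNumerator_ne_zero {Q : K[X]} (hQ : Q ≠ 0) (a c : ι → K) :
    clearedNumerator Q a c ≠ 0 :=
  ne_zero_of_degree_gt (n := ⊥) <| by
    rw [degree_clearedNumerator hQ a c]
    exact WithBot.bot_lt_coe _

end PartialFractions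

theorem levy_exponent_sub_eq_eval_add_sum_div {m n : ℕ} (μ σ lam p_u q_d α ζ : ℝ)
    (p η : Fin m → ℝ) (q θ : Fin n → ℝ) :
    μ * ζ + σ ^ 2 / 2 * ζ ^ 2 +
        lam * (p_u * ∑ i, p i * η i / (η i - ζ) + q_d * ∑ j, q j * θ j / (θ j + ζ) - 1) - α =
      (C (σ ^ 2 / 2) * X ^ 2 + C μ * X + C (-(lam + α))).eval ζ +
        ∑ k, Sum.elim (fun i => -(lam * p_u * p i * η i)) (fun j => lam * q_d * q j * θ j) k /
          (ζ - Sum.elim η (fun j => -θ j) k) := by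
  have hup : ∑ i, -(lam * p_u * p i * η i) / (ζ - η i) =
      lam * p_u * ∑ i, p i * η i / (η i - ζ) := by
    rw [mul_sum]
    refine sum_congr rfl fun i _ => ?_
    rw [neg_div, ← div_neg, neg_sub]
    ring
  have hdown : ∑ j, lam * q_d * q j * θ j / (ζ - -θ j) =
      lam * q_d * ∑ j, q j * θ j / (θ j + ζ) := by
    rw [mul_sum]
    refine sum_congr rfl fun j _ => ?_
    rw [sub_neg_eq_add, add_comm]
    ring
  simp only [Fintype.sum_sum_type, Sum.elim_inl, Sum.elim_inr, hup, hdown, eval_add, eval_mul,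
    eval_C, eval_pow, eval_X]
  ring

theorem levy_exponent_roots_finite_general
    (m n : ℕ)
    (μ σ lam p_u q_d : ℝ)
    (hσ : 0 < σ)
    (p : Fin m → ℝ) (q : Fin n → ℝ)
    (η : Fin m → ℝ) (θ : Fin n → ℝ)
    (G : ℝ → ℝ)
    (hG : ∀ ζ : ℝ, (∀ i, ζ ≠ η i) → (∀ j, ζ ≠ -θ j) →
      G ζ = μ * ζ + σ ^ 2 / 2 * ζ ^ 2 +
        lam * (p_u * ∑ i, p i * η i / (η i - ζ) +
               q_d * ∑ j, q j * θ j / (θ j + ζ) - 1)) :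
    ∀ α : ℝ,
      {ζ : ℝ | (∀ i, ζ ≠ η i) ∧ (∀ j, ζ ≠ -θ j) ∧ G ζ = α}.Finite ∧
      {ζ : ℝ | (∀ i, ζ ≠ η i) ∧ (∀ j, ζ ≠ -θ j) ∧ G ζ = α}.ncard ≤ m + n + 2 := by
  intro α
  set Q : ℝ[X] := C (σ ^ 2 / 2) * X ^ 2 + C μ * X + C (-(lam + α))
  have hQ : Q.natDegree = 2 := natDegree_quadratic (by positivity)
  have hQ0 : Q ≠ 0 := ne_zero_of_natDegree_gt (n := 0) (by omega)
  have key := finite_and_ncard_le_natDegree_of_forall_isRoot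
    (clearedNumerator_ne_zero hQ0 (Sum.elim η fun j => -θ j)
      (Sum.elim (fun i => -(lam * p_u * p i * η i)) fun j => lam * q_d * q j * θ j))
    (S := {ζ : ℝ | (∀ i, ζ ≠ η i) ∧ (∀ j, ζ ≠ -θ j) ∧ G ζ = α}) fun ζ ⟨hη, hθ, hGζ⟩ =>
      isRoot_clearedNumerator (Sum.forall.2 ⟨hη, hθ⟩) (by
        rw [← levy_exponent_sub_eq_eval_add_sum_div μ σ lam p_u q_d α ζ p η q θ,
          ← hG ζ hη hθ, hGζ, sub_self])
  rwa [natDegree_clearedNumerator hQ0, hQ, Fintype.card_sum, Fintype.card_fin, Fintype.card_fin,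
    add_comm 2] at key

/-- For every α ∈ ℝ, the set of ζ ∈ ℝ avoiding the poles
{η₁,…,η_m} ∪ {−θ₁,…,−θ_n} with G(ζ) = α is finite with at most m+n+2 elements. -/
theorem levy_exponent_roots_finite
    (m n : ℕ) (hm : 0 < m) (hn : 0 < n)
    (μ σ lam p_u q_d : ℝ)
    (hσ : 0 < σ) (hlam : 0 < lam)
    (hpu : 0 ≤ p_u) (hqd : 0 ≤ q_d) (hpq : p_u + q_d = 1)
    (p : Fin m → ℝ) (q : Fin n → ℝ)
    (hp : ∑ i, p i = 1) (hq : ∑ j, q j = 1)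
    (η : Fin m → ℝ) (θ : Fin n → ℝ)
    (hη0 : 0 < η ⟨0, hm⟩) (hθ0 : 0 < θ ⟨0, hn⟩)
    (hηmono : StrictMono η) (hθmono : StrictMono θ)
    (G : ℝ → ℝ)
    (hG : ∀ ζ : ℝ, (∀ i, ζ ≠ η i) → (∀ j, ζ ≠ -θ j) →
      G ζ = μ * ζ + σ ^ 2 / 2 * ζ ^ 2 +
        lam * (p_u * ∑ i, p i * η i / (η i - ζ) +
               q_d * ∑ j, q j * θ j / (θ j + ζ) - 1)) :
    ∀ α : ℝ,
      {ζ : ℝ | (∀ i, ζ ≠ η i) ∧ (∀ j, ζ ≠ -θ j) ∧ G ζ = α}.Finite ∧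
      {ζ : ℝ | (∀ i, ζ ≠ η i) ∧ (∀ j, ζ ≠ -θ j) ∧ G ζ = α}.ncard ≤ m + n + 2 :=
  levy_exponent_roots_finite_general m n μ σ lam p_u q_d hσ p q η θ G hG
end

section
/- Let H ∈ ℝ and let β_1, …, β_{m+1} be real numbers satisfying the interlacing condition 0 < β_1 < η_1 < β_2 < η_2 < ⋯ < η_m < β_{m+1}. Then the (m+1)×(m+1) real matrix A^{H} whose first row is (e^{β_1 H}, …, e^{β_{m+1} H}) and whose (k+1)-th row, for k = 1, …, m, is (e^{β_1 H}/(η_k − β_1), …, e^{β_{m+1} H}/(η_k − β_{m+1})), is nonsingular. -/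
/-!
Right-multiplying by `diag(e^{β_j H})` reduces the claim to a bordered Cauchy matrix. A kernel
vector `v` of that matrix gives a rational function `R x = ∑ j, v j / (x - β j)` with
`∑ j, v j = 0` and `R (η k) = 0` for all `k`. Its numerator over `∏ j, (x - β j)` has degree
`< m` but the `m` distinct roots `η k`, so it vanishes; evaluating it at `β j` gives `v j = 0`.
The interlacing keeps all the `β j` and `η k` distinct.
-/

open Polynomial Finset Lagrange

section PartialFractions

variable {K ι : Type*} [Field K] [Fintype ι] [DecidableEq ι]

/-- The numerator of `∑ j, v j / (X - β j)` over the common denominator `nodal univ β`. -/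
noncomputable def partialFractionNumerator (β v : ι → K) : K[X] :=
  ∑ j, C (v j) * nodal (univ.erase j) β

theorem eval_partialFractionNumerator {β : ι → K} (v : ι → K) {x : K} (hx : ∀ j, x ≠ β j) :
    (partialFractionNumerator β v).eval x = (nodal univ β).eval x * ∑ j, v j / (x - β j) := by
  simp only [partialFractionNumerator, eval_finsetSum, eval_mul, eval_C, mul_sum]
  refine sum_congr rfl fun j _ => ?_
  rw [nodal_eq_mul_nodal_erase (mem_univ j), eval_mul]
  simp only [eval_sub, eval_X, eval_C]
  field_simp [sub_ne_zero.2 (hx j)]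

theorem eval_partialFractionNumerator_node (β v : ι → K) (j : ι) :
    (partialFractionNumerator β v).eval (β j) = v j * (nodal (univ.erase j) β).eval (β j) := by
  simp only [partialFractionNumerator, eval_finsetSum, eval_mul, eval_C]
  refine sum_eq_single j (fun i _ hij => ?_) (by simp)
  rw [eval_nodal_at_node (s := univ.erase i) (v := β) (mem_erase.2 ⟨hij.symm, mem_univ j⟩),
    mul_zero]

theorem degree_partialFractionNumerator_lt (β : ι → K) {v : ι → K} (hv : ∑ j, v j = 0) :
    (partialFractionNumerator β v).degree < ↑(Fintype.card ι - 1) := by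
  have hcoeff (j : ι) {n : ℕ} (hn : Fintype.card ι - 1 ≤ n) :
      (nodal (univ.erase j) β).coeff n = if n = Fintype.card ι - 1 then 1 else 0 := by
    have hdeg : (nodal (univ.erase j) β).natDegree = Fintype.card ι - 1 := by
      rw [natDegree_nodal, card_erase_of_mem (mem_univ j), card_univ]
    split_ifs with h
    · rw [h, ← hdeg, (nodal_monic (s := univ.erase j) (v := β)).coeff_natDegree]
    · exact coeff_eq_zero_of_natDegree_lt (hdeg ▸ lt_of_le_of_ne hn (Ne.symm h))
  rw [degree_lt_iff_coeff_zero]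
  intro n hn
  simp only [partialFractionNumerator, finsetSum_coeff, coeff_C_mul, hcoeff _ hn]
  split_ifs <;> simp [hv]

theorem eq_zero_of_sum_div_sub_eq_zero {β : ι → K} (hβ : Function.Injective β) {v : ι → K}
    {s : Finset K} (hs : Fintype.card ι ≤ #s + 1) (hsβ : ∀ x ∈ s, ∀ j, x ≠ β j)
    (hv : ∑ j, v j = 0) (hres : ∀ x ∈ s, ∑ j, v j / (x - β j) = 0) : v = 0 := by
  have hP : partialFractionNumerator β v = 0 := by
    refine eq_zero_of_degree_lt_of_eval_finset_eq_zero s ?_ fun x hx => ?_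
    · exact (degree_partialFractionNumerator_lt β hv).trans_le (by norm_cast; omega)
    · rw [eval_partialFractionNumerator v (hsβ x hx), hres x hx, mul_zero]
  funext j
  have hj := eval_partialFractionNumerator_node β v j
  rw [hP, eval_zero, eq_comm, mul_eq_zero] at hj
  exact hj.resolve_right (eval_nodal_not_at_node fun i hi h =>
    (mem_erase.1 hi).1 (hβ h).symm)

end PartialFractions

section Interlacing

variable {α : Type*} [Preorder α] {n : ℕ} {η : Fin n → α} {β : Fin (n + 1) → α}

theorem strictMono_of_interlacing (h : ∀ k, β k.castSucc < η k ∧ η k < β k.succ) :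
    StrictMono β :=
  Fin.strictMono_iff_lt_succ.2 fun k => (h k).1.trans (h k).2

theorem ne_of_interlacing (h : ∀ k, β k.castSucc < η k ∧ η k < β k.succ) (k : Fin n)
    (j : Fin (n + 1)) : η k ≠ β j := by
  have hβ := (strictMono_of_interlacing h).monotone
  rcases le_or_gt j k.castSucc with hj | hj
  · exact ((hβ hj).trans_lt (h k).1).ne'
  · exact ((h k).2.trans_le (hβ (Fin.castSucc_lt_iff_succ_le.1 hj))).ne

end Interlacing

theorem det_vecCons_one_inv_sub_ne_zero {K : Type*} [Field K] {n : ℕ} {η : Fin n → K}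
    {β : Fin (n + 1) → K} (hη : Function.Injective η) (hβ : Function.Injective β)
    (hηβ : ∀ k j, η k ≠ β j) :
    (Matrix.of (Matrix.vecCons (fun _ => 1) fun k j => (η k - β j)⁻¹)).det ≠ 0 := by
  intro hdet
  obtain ⟨v, hv, hmul⟩ := Matrix.exists_mulVec_eq_zero_iff.2 hdet
  refine hv (eq_zero_of_sum_div_sub_eq_zero hβ (s := univ.map ⟨η, hη⟩) ?_ ?_ ?_ fun x hx => ?_)
  · simp
  · simpa using hηβ
  · simpa [Matrix.mulVec, dotProduct] using congrFun hmul 0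
  · obtain ⟨k, -, rfl⟩ := mem_map.1 hx
    simpa [Matrix.mulVec, dotProduct, div_eq_inv_mul] using congrFun hmul k.succ

/-- If `0 < β₁ < η₁ < β₂ < η₂ < ⋯ < η_m < β_{m+1}`, then the
`(m+1)×(m+1)` matrix whose first row is `(e^{β_j H})_j` and whose `(k+1)`-th
row is `(e^{β_j H}/(η_k − β_j))_j` is nonsingular. -/
theorem one_sided_exit_matrix_nonsingular
    (m : ℕ)
    (η : Fin m → ℝ) (hηmono : StrictMono η)
    (H : ℝ) (β : Fin (m + 1) → ℝ)
    (hinter : ∀ k : Fin m, β k.castSucc < η k ∧ η k < β k.succ) :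
    (Matrix.of fun i j : Fin (m + 1) =>
      if _ : (i : ℕ) = 0 then Real.exp (β j * H)
      else Real.exp (β j * H) / (η ⟨(i : ℕ) - 1, by have := i.isLt; omega⟩ - β j)).det
      ≠ 0 := by
  have hN := det_vecCons_one_inv_sub_ne_zero hηmono.injective
    (strictMono_of_interlacing hinter).injective (ne_of_interlacing hinter)
  have hD : (Matrix.diagonal fun j => Real.exp (β j * H)).det ≠ 0 := by
    simp [Matrix.det_diagonal, prod_ne_zero_iff, Real.exp_ne_zero]
  convert mul_ne_zero hN hD using 1
  rw [← Matrix.det_mul]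
  congr 1
  ext i j
  rw [Matrix.mul_diagonal]
  cases i using Fin.cases <;> simp [div_eq_inv_mul]
end

section
/- (Explicit solution of the bordered Cauchy system.) Let a_1, …, a_S be pairwise distinct real numbers with a_i ∉ {η_1, …, η_m} ∪ {−θ_1, …, −θ_n} for every i, and let γ ∈ ℝ with γ ∉ {η_1, …, η_m} ∪ {−θ_1, …, −θ_n}. Let Δ be the column vector ( 1, γ, 1/(η_1 − γ), …, 1/(η_m − γ), 1/(θ_1 + γ), …, 1/(θ_n + γ) ). Then the matrix A(a) is invertible and the unique solution Y* = (y*_1, …, y*_S) of the linear system A(a) Y = Δ is given, for i = 1, …, S, by y*_i = [ ∏_{j ≠ i} (a_j − γ) · ∏_{k=1}^{m} (η_k − a_i) · ∏_{l=1}^{n} (θ_l + a_i) ] / [ ∏_{j ≠ i} (a_j − a_i) · ∏_{k=1}^{m} (η_k − γ) · ∏_{l=1}^{n} (θ_l + γ) ]. -/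
open Real

/-- The bordered Cauchy matrix `A(a)`: rows are `(1,…,1)`, `(a_1,…,a_S)`,
the `m` rows `(1/(η_k − a_j))_j` and the `n` rows `(1/(θ_l + a_j))_j`,
where `S = m+n+2`. -/
noncomputable def borderedCauchy (m n : ℕ) (η : Fin m → ℝ) (θ : Fin n → ℝ)
    (a : Fin (m + n + 2) → ℝ) : Matrix (Fin (m + n + 2)) (Fin (m + n + 2)) ℝ :=
  Matrix.of fun i j =>
    if h0 : (i : ℕ) = 0 then 1
    else if h1 : (i : ℕ) = 1 then a j
    else if hi : (i : ℕ) < m + 2 then 1 / (η ⟨(i : ℕ) - 2, by omega⟩ - a j)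
    else 1 / (θ ⟨(i : ℕ) - 2 - m, by have := i.isLt; omega⟩ + a j)

/-- The right-hand side vector
`Δ = (1, γ, 1/(η_1 − γ), …, 1/(η_m − γ), 1/(θ_1 + γ), …, 1/(θ_n + γ))`. -/
noncomputable def deltaVec (m n : ℕ) (η : Fin m → ℝ) (θ : Fin n → ℝ) (γ : ℝ) :
    Fin (m + n + 2) → ℝ := fun i =>
  if h0 : (i : ℕ) = 0 then 1
  else if h1 : (i : ℕ) = 1 then γ
  else if hi : (i : ℕ) < m + 2 then 1 / (η ⟨(i : ℕ) - 2, by omega⟩ - γ)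
  else 1 / (θ ⟨(i : ℕ) - 2 - m, by have := i.isLt; omega⟩ + γ)

/-!
Row `r` of `A(a)` evaluates one of the functions `fᵣ = 1, x, 1/(ηₖ - x), 1/(θₗ + x)` at the
nodes `aⱼ`, and row `r` of `Δ` evaluates it at `γ`. With `W(x) = ∏ₖ (ηₖ - x) ∏ₗ (θₗ + x)`, each
`fᵣ W` is a polynomial of degree `< S`, so Lagrange interpolation at the `S` nodes reproduces its
value at `γ`: `∑ⱼ fᵣ(aⱼ) W(aⱼ) Lⱼ(γ) = fᵣ(γ) W(γ)`. Hence `yⱼ = W(aⱼ) Lⱼ(γ) / W(γ)` solves the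
system, and this is the stated formula.

If `A(a) Y = 0`, let `P = ∑ᵢ Yᵢ ∏_{j ≠ i} (X - aⱼ)`. The first two rows kill the two top
coefficients of `P`, so `deg P < m + n`, while the other rows say that `P` vanishes at the `m + n`
distinct points `ηₖ`, `-θₗ`. Hence `P = 0`, and evaluating at `aᵢ` gives `Yᵢ = 0`.
-/

open Polynomial Finset

namespace Lagrange

variable {F ι : Type*} [Field F] [Fintype ι] [DecidableEq ι] {a : ι → F}

theorem sum_eval_mul_eval_basis (ha : Function.Injective a) {p : F[X]}
    (hp : p.degree < Fintype.card ι) (γ : F) :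
    ∑ i, p.eval (a i) * (Lagrange.basis univ a i).eval γ = p.eval γ := by
  conv_rhs => rw [eq_interpolate (s := univ) (f := p) ha.injOn (by simpa using hp)]
  simp [interpolate_apply, eval_finsetSum]

noncomputable def weightedBasisEval (W : F[X]) (a : ι → F) (γ : F) (i : ι) : F :=
  W.eval (a i) * (Lagrange.basis univ a i).eval γ / W.eval γ

theorem sum_mul_weightedBasisEval (ha : Function.Injective a) {W p : F[X]} {γ : F}
    (hWγ : W.eval γ ≠ 0) (hWa : ∀ i, W.eval (a i) ≠ 0) (f : F → F)
    (hp : p.degree < Fintype.card ι) (hpf : ∀ x, W.eval x ≠ 0 → p.eval x = f x * W.eval x) :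
    ∑ i, f (a i) * weightedBasisEval W a γ i = f γ := by
  calc ∑ i, f (a i) * weightedBasisEval W a γ i
      = (∑ i, p.eval (a i) * (Lagrange.basis univ a i).eval γ) / W.eval γ := by
        simp only [weightedBasisEval, sum_div, hpf _ (hWa _), mul_div_assoc, mul_assoc]
    _ = f γ := by rw [sum_eval_mul_eval_basis ha hp, hpf γ hWγ, mul_div_cancel_right₀ _ hWγ]

theorem weightedBasisEval_eq (W : F[X]) (γ : F) (i : ι) :
    weightedBasisEval W a γ i =
      W.eval (a i) * (∏ j ∈ univ.erase i, (a j - γ)) /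
        ((∏ j ∈ univ.erase i, (a j - a i)) * W.eval γ) := by
  have hbasis : (Lagrange.basis univ a i).eval γ
      = (∏ j ∈ univ.erase i, (a j - γ)) / ∏ j ∈ univ.erase i, (a j - a i) := by
    rw [Lagrange.basis, eval_prod, ← prod_div_distrib]
    refine prod_congr rfl fun j _ => ?_
    simp only [basisDivisor, eval_mul, eval_C, eval_sub, eval_X]
    rw [inv_mul_eq_div, ← neg_sub (a j) γ, ← neg_sub (a j) (a i), neg_div_neg_eq]
  rw [weightedBasisEval, hbasis]
  ring

noncomputable def nodalCombination (a : ι → F) (Y : ι → F) : F[X] :=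
  ∑ i, C (Y i) * nodal (univ.erase i) a

theorem eval_nodalCombination_node (Y : ι → F) (i : ι) :
    (nodalCombination a Y).eval (a i) = Y i * ∏ j ∈ univ.erase i, (a i - a j) := by
  rw [nodalCombination, eval_finsetSum, sum_eq_single i]
  · rw [eval_mul, eval_C, eval_nodal]
  · intro j _ hji
    rw [eval_mul, eval_nodal_at_node (mem_erase.mpr ⟨Ne.symm hji, mem_univ i⟩), mul_zero]
  · exact fun h => absurd (mem_univ i) h

theorem eval_nodalCombination_of_forall_ne (Y : ι → F) {c : F} (hc : ∀ i, c ≠ a i) :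
    (nodalCombination a Y).eval c =
      (nodal univ a).eval c * ∑ i, (c - a i)⁻¹ * Y i := by
  rw [nodalCombination, eval_finsetSum, mul_sum]
  refine sum_congr rfl fun i _ => ?_
  rw [eval_mul, eval_C, nodal_eq_mul_nodal_erase (mem_univ i), eval_mul]
  simp only [eval_sub, eval_X, eval_C]
  field_simp [sub_ne_zero.mpr (hc i)]

theorem degree_nodalCombination_lt {k : ℕ} (hcard : Fintype.card ι = k + 2) {Y : ι → F}
    (h0 : ∑ i, Y i = 0) (h1 : ∑ i, a i * Y i = 0) :
    (nodalCombination a Y).degree < k := by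
  have hdeg : ∀ i, (nodal (univ.erase i) a).natDegree = k + 1 := fun i => by
    rw [natDegree_nodal, card_erase_of_mem (mem_univ i), card_univ, hcard]; rfl
  have hlead : ∀ i, (nodal (univ.erase i) a).coeff (k + 1) = 1 := fun i => by
    rw [← hdeg i]; exact nodal_monic.coeff_natDegree
  have hnext : ∀ i, (nodal (univ.erase i) a).coeff k = a i - ∑ j, a j := fun i => by
    have h := prod_X_sub_C_nextCoeff (s := univ.erase i) a
    rw [← nodal_eq, nextCoeff_of_natDegree_pos (by rw [hdeg i]; omega), hdeg i,
      Nat.add_sub_cancel] at h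
    rw [h, ← sum_erase_add _ _ (mem_univ i)]; ring
  rw [degree_lt_iff_coeff_zero]
  intro d hd
  rcases (show d = k ∨ d = k + 1 ∨ k + 1 < d by omega) with rfl | rfl | hd
  · simp only [nodalCombination, finsetSum_coeff, coeff_C_mul, hnext]
    calc ∑ i, Y i * (a i - ∑ j, a j) = ∑ i, a i * Y i - (∑ j, a j) * ∑ i, Y i := by
          rw [mul_sum, ← sum_sub_distrib]; exact sum_congr rfl fun i _ => by ring
      _ = 0 := by rw [h0, h1]; ring
  · simp only [nodalCombination, finsetSum_coeff, coeff_C_mul, hlead, mul_one, h0]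
  · refine coeff_eq_zero_of_natDegree_lt (lt_of_le_of_lt ?_ hd)
    exact natDegree_sum_le_of_forall_le _ _ fun i _ =>
      (natDegree_C_mul_le _ _).trans (hdeg i).le

theorem eq_zero_of_sum_inv_sub_mul_eq_zero (ha : Function.Injective a) {k : ℕ}
    (hcard : Fintype.card ι = k + 2) {Y : ι → F} (h0 : ∑ i, Y i = 0)
    (h1 : ∑ i, a i * Y i = 0) {s : Finset F} (hs : k ≤ #s) (hsa : ∀ c ∈ s, ∀ i, c ≠ a i)
    (hsY : ∀ c ∈ s, ∑ i, (c - a i)⁻¹ * Y i = 0) : Y = 0 := by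
  have hP : nodalCombination a Y = 0 := by
    refine eq_zero_of_degree_lt_of_eval_finset_eq_zero s
      ((degree_nodalCombination_lt hcard h0 h1).trans_le (by exact_mod_cast hs)) fun c hc => ?_
    rw [eval_nodalCombination_of_forall_ne Y (hsa c hc), hsY c hc, mul_zero]
  funext i
  have hnode := eval_nodalCombination_node (a := a) Y i
  rw [hP, eval_zero, eq_comm, mul_eq_zero] at hnode
  refine hnode.resolve_right (prod_ne_zero_iff.mpr fun j hj => sub_ne_zero.mpr ?_)
  exact ha.ne (ne_of_mem_erase hj).symm

end Lagrange

theorem Polynomial.exists_eval_eq_inv_mul_of_dvd {F : Type*} [Field F] {q W : F[X]}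
    (h : q ∣ W) :
    ∃ p : F[X], p.natDegree ≤ W.natDegree ∧
      ∀ x, W.eval x ≠ 0 → p.eval x = (q.eval x)⁻¹ * W.eval x := by
  obtain ⟨p, rfl⟩ := h
  by_cases hW : q * p = 0
  · exact ⟨0, by simp, fun x hx => absurd (by simp [hW]) hx⟩
  refine ⟨p, natDegree_le_of_dvd (dvd_mul_left p q) hW, fun x hx => ?_⟩
  rw [eval_mul] at hx ⊢
  rw [inv_mul_cancel_left₀ (left_ne_zero_of_mul hx)]

namespace BorderedCauchy

open Lagrange

variable {m n : ℕ} {η : Fin m → ℝ} {θ : Fin n → ℝ}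

noncomputable def rowFun (m n : ℕ) (η : Fin m → ℝ) (θ : Fin n → ℝ) (i : Fin (m + n + 2))
    (x : ℝ) : ℝ :=
  if h0 : (i : ℕ) = 0 then 1
  else if h1 : (i : ℕ) = 1 then x
  else if hi : (i : ℕ) < m + 2 then 1 / (η ⟨(i : ℕ) - 2, by omega⟩ - x)
  else 1 / (θ ⟨(i : ℕ) - 2 - m, by have := i.isLt; omega⟩ + x)

theorem mulVec_apply (a Y : Fin (m + n + 2) → ℝ) (i : Fin (m + n + 2)) :
    (borderedCauchy m n η θ a).mulVec Y i = ∑ j, rowFun m n η θ i (a j) * Y j :=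
  rfl

theorem deltaVec_apply (γ : ℝ) (i : Fin (m + n + 2)) :
    deltaVec m n η θ γ i = rowFun m n η θ i γ :=
  rfl

def etaRow (k : Fin m) : Fin (m + n + 2) := ⟨k + 2, by omega⟩

def thetaRow (l : Fin n) : Fin (m + n + 2) := ⟨l + m + 2, by omega⟩

theorem row_cases (i : Fin (m + n + 2)) :
    i = 0 ∨ i = 1 ∨ (∃ k, i = etaRow k) ∨ ∃ l, i = thetaRow l := by
  obtain ⟨i, hi⟩ := i
  rcases (show i = 0 ∨ i = 1 ∨ (2 ≤ i ∧ i < m + 2) ∨ m + 2 ≤ i by omega) with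
    rfl | rfl | h | h
  · exact Or.inl rfl
  · exact Or.inr (Or.inl rfl)
  · exact Or.inr (Or.inr (Or.inl ⟨⟨i - 2, by omega⟩, Fin.ext (by simp [etaRow]; omega)⟩))
  · exact Or.inr (Or.inr (Or.inr ⟨⟨i - m - 2, by omega⟩, Fin.ext (by simp [thetaRow]; omega)⟩))

@[simp] theorem rowFun_zero (x : ℝ) : rowFun m n η θ 0 x = 1 := by
  simp [rowFun]

@[simp] theorem rowFun_one (x : ℝ) : rowFun m n η θ 1 x = x := by
  simp [rowFun]

@[simp] theorem rowFun_etaRow (k : Fin m) (x : ℝ) :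
    rowFun m n η θ (etaRow k) x = 1 / (η k - x) := by
  simp [rowFun, etaRow]

@[simp] theorem rowFun_thetaRow (l : Fin n) (x : ℝ) :
    rowFun m n η θ (thetaRow l) x = 1 / (θ l + x) := by
  simp [rowFun, thetaRow]

noncomputable def weightPoly (η : Fin m → ℝ) (θ : Fin n → ℝ) : ℝ[X] :=
  (∏ k, (C (η k) - X)) * ∏ l, (C (θ l) + X)

theorem eval_weightPoly (x : ℝ) :
    (weightPoly η θ).eval x = (∏ k, (η k - x)) * ∏ l, (θ l + x) := by
  simp [weightPoly, eval_prod]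

theorem eval_weightPoly_ne_zero {x : ℝ} (hη : ∀ k, x ≠ η k) (hθ : ∀ l, x ≠ -θ l) :
    (weightPoly η θ).eval x ≠ 0 := by
  rw [eval_weightPoly]
  refine mul_ne_zero (prod_ne_zero_iff.mpr fun k _ => sub_ne_zero.mpr (hη k).symm)
    (prod_ne_zero_iff.mpr fun l _ h => hθ l ?_)
  linarith

theorem natDegree_weightPoly_le : (weightPoly η θ).natDegree ≤ m + n := by
  have hfactor : ∀ c : ℝ, (C c - X).natDegree ≤ 1 ∧ (C c + X).natDegree ≤ 1 := fun c => by
    rw [← neg_sub, natDegree_neg, natDegree_sub_C, natDegree_C_add, natDegree_X]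
    exact ⟨le_rfl, le_rfl⟩
  refine natDegree_mul_le.trans (add_le_add ?_ ?_)
  · exact (natDegree_prod_le _ _).trans
      ((sum_le_sum fun k _ => (hfactor (η k)).1).trans (by simp))
  · exact (natDegree_prod_le _ _).trans
      ((sum_le_sum fun l _ => (hfactor (θ l)).2).trans (by simp))

theorem exists_polynomial_eval_eq_rowFun_mul (i : Fin (m + n + 2)) :
    ∃ p : ℝ[X], p.degree < ↑(m + n + 2) ∧ ∀ x, (weightPoly η θ).eval x ≠ 0 →
      p.eval x = rowFun m n η θ i x * (weightPoly η θ).eval x := by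
  suffices h : ∃ p : ℝ[X], p.natDegree ≤ m + n + 1 ∧ ∀ x, (weightPoly η θ).eval x ≠ 0 →
      p.eval x = rowFun m n η θ i x * (weightPoly η θ).eval x by
    obtain ⟨p, hp, hpf⟩ := h
    exact ⟨p, (degree_le_of_natDegree_le hp).trans_lt (by exact_mod_cast Nat.lt_succ_self _), hpf⟩
  have hW := natDegree_weightPoly_le (η := η) (θ := θ)
  rcases row_cases i with rfl | rfl | ⟨k, rfl⟩ | ⟨l, rfl⟩
  · exact ⟨weightPoly η θ, by omega, fun x _ => by simp⟩
  · refine ⟨X * weightPoly η θ, natDegree_mul_le.trans ?_, fun x _ => by simp⟩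
    rw [natDegree_X]; omega
  · obtain ⟨p, hp, hpf⟩ := exists_eval_eq_inv_mul_of_dvd (W := weightPoly η θ)
      (q := C (η k) - X) (dvd_mul_of_dvd_left (dvd_prod_of_mem _ (mem_univ k)) _)
    refine ⟨p, by omega, fun x hx => ?_⟩
    rw [hpf x hx, rowFun_etaRow, one_div, eval_sub, eval_C, eval_X]
  · obtain ⟨p, hp, hpf⟩ := exists_eval_eq_inv_mul_of_dvd (W := weightPoly η θ)
      (q := C (θ l) + X) (dvd_mul_of_dvd_right (dvd_prod_of_mem _ (mem_univ l)) _)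
    refine ⟨p, by omega, fun x hx => ?_⟩
    rw [hpf x hx, rowFun_thetaRow, one_div, eval_add, eval_C, eval_X]

variable {a : Fin (m + n + 2) → ℝ}

theorem mulVec_weightedBasisEval (ha : Function.Injective a)
    (haη : ∀ i k, a i ≠ η k) (haθ : ∀ i l, a i ≠ -θ l)
    {γ : ℝ} (hγη : ∀ k, γ ≠ η k) (hγθ : ∀ l, γ ≠ -θ l) :
    (borderedCauchy m n η θ a).mulVec (weightedBasisEval (weightPoly η θ) a γ) =
      deltaVec m n η θ γ := by
  funext i
  obtain ⟨p, hp, hpf⟩ := exists_polynomial_eval_eq_rowFun_mul (η := η) (θ := θ) i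
  rw [mulVec_apply, deltaVec_apply]
  exact sum_mul_weightedBasisEval ha (eval_weightPoly_ne_zero hγη hγθ)
    (fun i => eval_weightPoly_ne_zero (haη i) (haθ i)) _ (by simpa using hp) hpf

theorem mulVec_injective (ha : Function.Injective a)
    (haη : ∀ i k, a i ≠ η k) (haθ : ∀ i l, a i ≠ -θ l)
    (hηinj : Function.Injective η) (hθinj : Function.Injective θ)
    (hη : ∀ k, 0 < η k) (hθ : ∀ l, 0 < θ l) :
    Function.Injective (borderedCauchy m n η θ a).mulVec := by
  set poles : Finset ℝ := univ.image η ∪ univ.image (-θ)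
  have hcard : #poles = m + n := by
    have hθinj' : Function.Injective (-θ) := neg_injective.comp hθinj
    rw [card_union_of_disjoint, card_image_of_injective _ hηinj,
      card_image_of_injective _ hθinj', card_univ, card_univ, Fintype.card_fin, Fintype.card_fin]
    simp only [disjoint_left, mem_image, mem_univ, true_and, Pi.neg_apply, not_exists]
    rintro _ ⟨k, rfl⟩ l h
    linarith [hη k, hθ l]
  refine (injective_iff_map_eq_zero (borderedCauchy m n η θ a).mulVecLin).mpr fun Y hY => ?_
  have hrow : ∀ i, ∑ j, rowFun m n η θ i (a j) * Y j = 0 := fun i => by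
    rw [← mulVec_apply]; exact congrFun hY i
  refine eq_zero_of_sum_inv_sub_mul_eq_zero ha (k := m + n) (by simp) (by simpa using hrow 0)
    (by simpa using hrow 1) hcard.ge ?_ ?_
  all_goals simp only [poles, mem_union, mem_image, mem_univ, true_and, Pi.neg_apply]
  · rintro c (⟨k, rfl⟩ | ⟨l, rfl⟩) i
    exacts [(haη i k).symm, (haθ i l).symm]
  · rintro c (⟨k, rfl⟩ | ⟨l, rfl⟩)
    · simpa using hrow (etaRow k)
    · calc ∑ i, (-θ l - a i)⁻¹ * Y i = -∑ i, (θ l + a i)⁻¹ * Y i := by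
            rw [← sum_neg_distrib]
            exact sum_congr rfl fun i _ => by rw [← neg_add', inv_neg, neg_mul]
        _ = 0 := by simpa using hrow (thetaRow l)

theorem weightedBasisEval_weightPoly (a : Fin (m + n + 2) → ℝ) (γ : ℝ) (i : Fin (m + n + 2)) :
    weightedBasisEval (weightPoly η θ) a γ i =
      ((∏ j ∈ univ.erase i, (a j - γ)) * (∏ k, (η k - a i)) * (∏ l, (θ l + a i))) /
        ((∏ j ∈ univ.erase i, (a j - a i)) * (∏ k, (η k - γ)) * (∏ l, (θ l + γ))) := by
  rw [weightedBasisEval_eq, eval_weightPoly, eval_weightPoly]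
  ring

end BorderedCauchy

/-- explicit solution of the bordered Cauchy system: `A(a)` is
invertible and the unique solution of `A(a) Y = Δ` is given by
`y*_i = (∏_{j≠i}(a_j − γ) ∏_k(η_k − a_i) ∏_l(θ_l + a_i)) /
        (∏_{j≠i}(a_j − a_i) ∏_k(η_k − γ) ∏_l(θ_l + γ))`. -/
theorem borderedCauchy_system_solution
    (m n : ℕ) (hm : 0 < m) (hn : 0 < n)
    (η : Fin m → ℝ) (θ : Fin n → ℝ)
    (hη0 : 0 < η ⟨0, hm⟩) (hθ0 : 0 < θ ⟨0, hn⟩)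
    (hηmono : StrictMono η) (hθmono : StrictMono θ)
    (a : Fin (m + n + 2) → ℝ)
    (ha : Function.Injective a)
    (haη : ∀ (i : Fin (m + n + 2)) (k : Fin m), a i ≠ η k)
    (haθ : ∀ (i : Fin (m + n + 2)) (l : Fin n), a i ≠ -θ l)
    (γ : ℝ) (hγη : ∀ k : Fin m, γ ≠ η k) (hγθ : ∀ l : Fin n, γ ≠ -θ l) :
    IsUnit (borderedCauchy m n η θ a) ∧
    ∀ Y : Fin (m + n + 2) → ℝ,
      (borderedCauchy m n η θ a).mulVec Y = deltaVec m n η θ γ ↔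
      Y = fun i =>
        ((∏ j ∈ Finset.univ.erase i, (a j - γ)) *
         (∏ k, (η k - a i)) * (∏ l, (θ l + a i))) /
        ((∏ j ∈ Finset.univ.erase i, (a j - a i)) *
         (∏ k, (η k - γ)) * (∏ l, (θ l + γ))) := by
  have hηpos : ∀ k, 0 < η k := fun k =>
    hη0.trans_le (hηmono.monotone (Fin.mk_le_of_le_val k.val.zero_le))
  have hθpos : ∀ l, 0 < θ l := fun l =>
    hθ0.trans_le (hθmono.monotone (Fin.mk_le_of_le_val l.val.zero_le))
  have hinj := BorderedCauchy.mulVec_injective ha haη haθ hηmono.injective hθmono.injective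
    hηpos hθpos
  have hsol := BorderedCauchy.mulVec_weightedBasisEval ha haη haθ hγη hγθ
  refine ⟨Matrix.mulVec_injective_iff_isUnit.mp hinj, fun Y => ?_⟩
  simp only [← BorderedCauchy.weightedBasisEval_weightPoly]
  exact ⟨fun hY => hinj (hY.trans hsol.symm), fun hY => hY ▸ hsol⟩
end

section
/- (Uniqueness for the boundary value problem of the integro-differential generator.) Let α > 0, ρ ≥ 0 and h < H be reals. Suppose φ : ℝ → ℝ is bounded and continuous, φ(x) = 0 for all x ∈ (−∞, h] ∪ [H, +∞), φ is twice continuously differentiable on the open interval (h, H), and for every x ∈ (h, H) it satisfies μ φ′(x) + (σ²/2) φ″(x) + λ ∫_ℝ (φ(x+y) − φ(x)) f_Y(y) dy − (α + ρ) φ(x) = 0. Then φ(x) = 0 for all x ∈ ℝ. -/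
/-!
A maximum principle. Suppose `φ` had a positive value. Since `φ` is continuous and vanishes
outside `(h, H)`, it attains a positive global maximum at some `x₀ ∈ (h, H)`. There
`φ'(x₀) = 0`, `φ''(x₀) ≤ 0` (second-derivative test) and the jump term
`∫ (φ(x₀ + y) - φ(x₀)) f_Y(y) dy` is `≤ 0` because `f_Y ≥ 0`. Hence the generator is `≤ 0`
at `x₀`, while the equation makes it equal to `(α + ρ) φ(x₀) > 0`. So `φ ≤ 0`, and applying
the same argument to `-φ` gives `φ ≥ 0`.
-/

open MeasureTheory Filter Topology Set

/-- No differentiability is needed: `deriv (deriv f) x₀ > 0` would make `x₀` also a local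
minimum, so `f` would be locally constant. -/
theorem IsLocalMax.deriv_deriv_nonpos {f : ℝ → ℝ} {x₀ : ℝ} (hmax : IsLocalMax f x₀)
    (hc : ContinuousAt f x₀) : deriv (deriv f) x₀ ≤ 0 := by
  by_contra! hpos
  have hmin : IsLocalMin f x₀ := isLocalMin_of_deriv_deriv_pos hpos hmax.deriv_eq_zero hc
  have hconst : f =ᶠ[𝓝 x₀] fun _ => f x₀ :=
    (hmin.and hmax).mono fun _ hx => le_antisymm hx.2 hx.1
  have hzero : deriv (deriv f) x₀ = 0 := by
    rw [hconst.deriv.deriv_eq]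
    simp
  exact hpos.ne' hzero

noncomputable def jumpDiffusionGenerator (μ σ lam : ℝ) (fY φ : ℝ → ℝ) (x : ℝ) : ℝ :=
  μ * deriv φ x + σ ^ 2 / 2 * deriv (deriv φ) x + lam * ∫ y, (φ (x + y) - φ x) * fY y

section Generator

variable {μ σ lam : ℝ} {fY φ : ℝ → ℝ}

theorem jumpDiffusionGenerator_neg (x : ℝ) :
    jumpDiffusionGenerator μ σ lam fY (-φ) x = -jumpDiffusionGenerator μ σ lam fY φ x := by
  have hderiv : deriv (-φ) = -deriv φ := funext fun _ => deriv.neg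
  have hjump : ∫ y, ((-φ) (x + y) - (-φ) x) * fY y = -∫ y, (φ (x + y) - φ x) * fY y := by
    rw [← integral_neg]
    congr 1 with y
    simp only [Pi.neg_apply]
    ring
  rw [jumpDiffusionGenerator, jumpDiffusionGenerator, hderiv, deriv.neg, hjump,
    Pi.neg_apply]
  ring

theorem jumpDiffusionGenerator_nonpos_of_forall_le {x₀ : ℝ} (hlam : 0 ≤ lam)
    (hfY : ∀ y, 0 ≤ fY y) (hmax : ∀ y, φ y ≤ φ x₀) (hc : ContinuousAt φ x₀) :
    jumpDiffusionGenerator μ σ lam fY φ x₀ ≤ 0 := by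
  have hloc : IsLocalMax φ x₀ := Eventually.of_forall hmax
  have hdiffusion : σ ^ 2 / 2 * deriv (deriv φ) x₀ ≤ 0 :=
    mul_nonpos_of_nonneg_of_nonpos (by positivity) (hloc.deriv_deriv_nonpos hc)
  have hjump : lam * ∫ y, (φ (x₀ + y) - φ x₀) * fY y ≤ 0 :=
    mul_nonpos_of_nonneg_of_nonpos hlam <| integral_nonpos fun y =>
      mul_nonpos_of_nonpos_of_nonneg (sub_nonpos.mpr (hmax _)) (hfY y)
  rw [jumpDiffusionGenerator, hloc.deriv_eq_zero, mul_zero, zero_add]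
  linarith

theorem nonpos_of_jumpDiffusionGenerator_eq {κ : ℝ} {U : Set ℝ} (hlam : 0 ≤ lam)
    (hfY : ∀ y, 0 ≤ fY y) (hκ : 0 < κ) (hcont : Continuous φ) (hsupp : HasCompactSupport φ)
    (hzero : ∀ x ∉ U, φ x = 0)
    (heq : ∀ x ∈ U, jumpDiffusionGenerator μ σ lam fY φ x = κ * φ x) (x : ℝ) :
    φ x ≤ 0 := by
  obtain ⟨x₀, hx₀⟩ := hcont.exists_forall_ge_of_hasCompactSupport hsupp
  by_contra! hpos
  have hmax_pos : 0 < φ x₀ := hpos.trans_le (hx₀ x)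
  have hx₀U : x₀ ∈ U := by
    by_contra hx₀U
    exact hmax_pos.ne' (hzero x₀ hx₀U)
  have hgen := jumpDiffusionGenerator_nonpos_of_forall_le (μ := μ) (σ := σ) hlam hfY hx₀
    hcont.continuousAt
  rw [heq x₀ hx₀U] at hgen
  exact (mul_pos hκ hmax_pos).not_ge hgen

end Generator

theorem bvp_uniqueness_general
    (μ σ lam : ℝ)
    (hlam : 0 < lam)
    (fY : ℝ → ℝ)
    (hfY0 : ∀ y : ℝ, 0 ≤ fY y)
    (α ρ : ℝ) (hα : 0 < α) (hρ : 0 ≤ ρ)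
    (h H : ℝ)
    (φ : ℝ → ℝ)
    (hφcont : Continuous φ)
    (hφzero : ∀ x : ℝ, x ∉ Set.Ioo h H → φ x = 0)
    (hφeq : ∀ x ∈ Set.Ioo h H,
      μ * deriv φ x + σ ^ 2 / 2 * deriv (deriv φ) x +
        lam * (∫ y : ℝ, (φ (x + y) - φ x) * fY y) - (α + ρ) * φ x = 0):
    ∀ x : ℝ, φ x = 0 := by
  have hκ : 0 < α + ρ := by linarith
  have hsupp : HasCompactSupport φ :=
    HasCompactSupport.intro isCompact_Icc fun x hx =>
      hφzero x fun hx' => hx (Ioo_subset_Icc_self hx')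
  have heq : ∀ x ∈ Ioo h H, jumpDiffusionGenerator μ σ lam fY φ x = (α + ρ) * φ x :=
    fun x hx => sub_eq_zero.mp (hφeq x hx)
  have hnonpos := nonpos_of_jumpDiffusionGenerator_eq hlam.le hfY0 hκ hφcont hsupp hφzero heq
  have hnonneg := nonpos_of_jumpDiffusionGenerator_eq hlam.le hfY0 hκ hφcont.neg hsupp.neg
    (fun x hx => by simp [hφzero x hx])
    (fun x hx => by rw [jumpDiffusionGenerator_neg, heq x hx, Pi.neg_apply, mul_neg])
  exact fun x => le_antisymm (hnonpos x) (neg_nonpos.mp (hnonneg x))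

/-- uniqueness for the boundary value problem of the
integro-differential generator of the mixed-exponential jump-diffusion: any
bounded continuous `φ` vanishing outside `(h, H)`, twice continuously
differentiable on `(h, H)` and satisfying `(𝓛 − (α+ρ))φ = 0` on `(h, H)`
vanishes identically. -/
theorem bvp_uniqueness
    (m n : ℕ) (hm : 0 < m) (hn : 0 < n)
    (μ σ lam p_u q_d : ℝ)
    (hσ : 0 < σ) (hlam : 0 < lam)
    (hpu : 0 ≤ p_u) (hqd : 0 ≤ q_d) (hpq : p_u + q_d = 1)
    (p : Fin m → ℝ) (q : Fin n → ℝ)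
    (hp : ∑ i, p i = 1) (hq : ∑ j, q j = 1)
    (η : Fin m → ℝ) (θ : Fin n → ℝ)
    (hη0 : 0 < η ⟨0, hm⟩) (hθ0 : 0 < θ ⟨0, hn⟩)
    (hηmono : StrictMono η) (hθmono : StrictMono θ)
    (fY : ℝ → ℝ)
    (hfY : ∀ y : ℝ, fY y =
      if 0 ≤ y then p_u * ∑ i, p i * η i * Real.exp (-(η i * y))
      else q_d * ∑ j, q j * θ j * Real.exp (θ j * y))
    (hfY0 : ∀ y : ℝ, 0 ≤ fY y)
    (α ρ : ℝ) (hα : 0 < α) (hρ : 0 ≤ ρ)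
    (h H : ℝ) (hhH : h < H)
    (φ : ℝ → ℝ)
    (hφbdd : ∃ C : ℝ, ∀ x : ℝ, |φ x| ≤ C)
    (hφcont : Continuous φ)
    (hφzero : ∀ x : ℝ, x ∉ Set.Ioo h H → φ x = 0)
    (hφsmooth : ContDiffOn ℝ 2 φ (Set.Ioo h H))
    (hφeq : ∀ x ∈ Set.Ioo h H,
      μ * deriv φ x + σ ^ 2 / 2 * deriv (deriv φ) x +
        lam * (∫ y : ℝ, (φ (x + y) - φ x) * fY y) - (α + ρ) * φ x = 0) :
    ∀ x : ℝ, φ x = 0 :=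
  bvp_uniqueness_general μ σ lam hlam fY hfY0 α ρ hα hρ h H φ hφcont hφzero hφeq
end
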